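/- arXiv:2211.11997 — 2 statements merged into one kernel-verified Lean document; each statement's English description precedes it below -/
import Mathlib

section
/- Let Z = <c, G> be a zonotope in R^n with sliceable generators g_1,...,g_m as above (each g_k is the unique generator with nonzero entry in coordinate n−m+k). If x ∈ Z is a point whose last m coordinates equal q ∈ R^m, then x ∈ slice(Z, q), where slice(Z, q) = <c + Σ_{k=1}^m σ_k g_k, [g_{m+1},...,g_ℓ]> with σ_k = (q_k − c_{n−m+k})/[g_k]_{n−m+k}. -/
/-- The zonotope with center `c` and generators `G k`. -/
def zono {n : ℕ} {ι : Type} [Fintype ι] (c : Fin n → ℝ) (G : ι → Fin n → ℝ) :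
    Set (Fin n → ℝ) :=
  {x | ∃ β : ι → ℝ, (∀ k, β k ∈ Set.Icc (-1 : ℝ) 1) ∧ x = c + ∑ k, β k • G k}

/-! Evaluating a point `c + ∑ α i • G i + ∑ β j • H j` of the zonotope at a coordinate `p k`
seen only by `G k` gives `c (p k) + α k * G k (p k)`, so the coefficients of the sliced
generators are forced; what remains is a point of the zonotope spanned by the other generators. -/

open Set

section

variable {n : ℕ} {ι κ : Type} [Fintype ι] [Fintype κ]

theorem mem_zono_sumElim_iff {c x : Fin n → ℝ} {G : ι → Fin n → ℝ} {H : κ → Fin n → ℝ} :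
    x ∈ zono c (Sum.elim G H) ↔ ∃ α : ι → ℝ, ∃ β : κ → ℝ, (∀ i, α i ∈ Icc (-1 : ℝ) 1) ∧
      (∀ j, β j ∈ Icc (-1 : ℝ) 1) ∧ x = c + ∑ i, α i • G i + ∑ j, β j • H j := by
  constructor
  · rintro ⟨γ, hγ, rfl⟩
    refine ⟨γ ∘ Sum.inl, γ ∘ Sum.inr, fun i => hγ _, fun j => hγ _, ?_⟩
    simp only [Fintype.sum_sum_type, Sum.elim_inl, Sum.elim_inr, Function.comp_apply, add_assoc]
  · rintro ⟨α, β, hα, hβ, rfl⟩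
    refine ⟨Sum.elim α β, Sum.forall.mpr ⟨hα, hβ⟩, ?_⟩
    simp only [Fintype.sum_sum_type, Sum.elim_inl, Sum.elim_inr, add_assoc]

theorem sum_smul_apply_of_eq_zero_of_ne {R σ : Type*} [Semiring R] [DecidableEq ι]
    {G : ι → σ → R} {p : σ} {k : ι}
    (hG : ∀ i, i ≠ k → G i p = 0) (α : ι → R) : (∑ i, α i • G i) p = α k * G k p := by
  rw [Finset.sum_apply, Finset.sum_eq_single k (fun i _ hi => by simp [hG i hi]) (by simp)]
  rfl

theorem sum_smul_apply_of_forall_eq_zero {R σ : Type*} [Semiring R] {H : κ → σ → R} {p : σ}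
    (hH : ∀ j, H j p = 0) (β : κ → R) : (∑ j, β j • H j) p = 0 := by
  simp [Finset.sum_apply, hH]

theorem mem_zono_slice_of_mem {c x : Fin n → ℝ} {G : ι → Fin n → ℝ} {H : κ → Fin n → ℝ}
    (p : ι → Fin n) (hnz : ∀ k, G k (p k) ≠ 0) (hG : ∀ k i, i ≠ k → G i (p k) = 0)
    (hH : ∀ k j, H j (p k) = 0) (hx : x ∈ zono c (Sum.elim G H)) :
    x ∈ zono (c + ∑ k, ((x (p k) - c (p k)) / G k (p k)) • G k) H := by
  classical
  obtain ⟨α, β, -, hβ, rfl⟩ := mem_zono_sumElim_iff.mp hx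
  have hα : ∀ k, ((c + ∑ i, α i • G i + ∑ j, β j • H j) (p k) - c (p k)) / G k (p k) = α k := by
    intro k
    rw [div_eq_iff (hnz k), Pi.add_apply, Pi.add_apply,
      sum_smul_apply_of_eq_zero_of_ne (hG k) α, sum_smul_apply_of_forall_eq_zero (hH k) β]
    ring
  simp only [hα]
  exact ⟨β, hβ, rfl⟩

end

/-- If `x` lies in a zonotope `⟨c, [g₁, g₂]⟩ ⊂ ℝ^(d+m)` whose sliceable generators `g₁`
are the unique generators with nonzero entries in the last `m` coordinates, and the last
`m` coordinates of `x` equal `q`, then `x` lies in the sliced zonotope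
`⟨c + Σ σ k • g₁ k, g₂⟩` with `σ k = (q k − c_{n−m+k}) / [g₁ k]_{n−m+k}`. -/
theorem mem_slice_of_mem {d m ℓ' : ℕ} (c : Fin (d + m) → ℝ)
    (g₁ : Fin m → Fin (d + m) → ℝ) (g₂ : Fin ℓ' → Fin (d + m) → ℝ)
    (hnz : ∀ k : Fin m, g₁ k (Fin.natAdd d k) ≠ 0)
    (huniq₁ : ∀ k j : Fin m, j ≠ k → g₁ j (Fin.natAdd d k) = 0)
    (huniq₂ : ∀ (k : Fin m) (j : Fin ℓ'), g₂ j (Fin.natAdd d k) = 0)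
    (q : Fin m → ℝ) (x : Fin (d + m) → ℝ)
    (hx : x ∈ zono c (Sum.elim g₁ g₂))
    (hq : ∀ k : Fin m, x (Fin.natAdd d k) = q k) :
    x ∈ zono (c + ∑ k, ((q k - c (Fin.natAdd d k)) / g₁ k (Fin.natAdd d k)) • g₁ k) g₂ := by
  simpa only [hq] using mem_zono_slice_of_mem (Fin.natAdd d) hnz huniq₁ huniq₂ hx
end

section
/- Consider u : [t₀, ∞) → R continuously differentiable with u̇(t) = −K u(t) − (κ(t) M + φ(t)) u(t) + Δ(t), where K > 0, κ(t) ≥ κ₁ > 0, φ(t) ≥ φ₁ > 0, and |Δ(t)| ≤ b_pro·u(t) + b_off for u(t) ∈ [0, u_cri], with constants satisfying q := b_off²/(4(κ₁ M + φ₁ − b_pro)) < (0.15)² K and κ₁ M + φ₁ > b_pro. Then for V(t) = (1/2) u(t)², whenever u(t) ∈ [0.15, u_cri] we have V̇(t) ≤ −K u(t)² + q < −K(u(t)² − 0.15²) ≤ 0. In particular, if u(t₀) ∈ (0.15, u_cri], then u decreases monotonically until it reaches 0.15, and the time t_b' at which u first equals 0.15 satisfies t_b' ≤ t₀ + (u(t₀)²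 − 0.15²)/(2·0.15²·K − 2q). -/
/-!
Completing the square, `b_off u - c u² ≤ b_off² / (4c)` with `c = κ₁ M + φ₁ - b_pro`, bounds
`V̇ = u u̇` by `-K u² + q` on `[0.15, u_cri]`, and `q < 0.15² K` makes this negative there.
Hence `u` cannot cross the level `u_cri` upwards, and as long as `u > 0.15` the quantity
`u² + 2 (0.15² K - q) t` is nonincreasing, which brings `u` down to `0.15` within the stated time.
Before that first time `u̇ < 0`, so `u` is strictly decreasing.
-/

open Set

lemma mul_sub_mul_sq_le_sq_div (b : ℝ) {c : ℝ} (hc : 0 < c) (x : ℝ) :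
    b * x - c * x ^ 2 ≤ b ^ 2 / (4 * c) := by
  rw [le_div_iff₀ (by positivity)]
  nlinarith [sq_nonneg (b - 2 * c * x)]

lemma lyapunov_rate_le {u K M κ κ₁ φ φ₁ Δ bpro boff : ℝ} (hu : 0 ≤ u) (hM : 0 ≤ M)
    (hκ : κ₁ ≤ κ) (hφ : φ₁ ≤ φ) (hΔ : Δ ≤ bpro * u + boff) (hden : bpro < κ₁ * M + φ₁) :
    u * (-K * u - (κ * M + φ) * u + Δ) ≤
      -K * u ^ 2 + boff ^ 2 / (4 * (κ₁ * M + φ₁ - bpro)) := by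
  have hsquare := mul_sub_mul_sq_le_sq_div boff (sub_pos.2 hden) u
  have hdamping : (κ₁ * M + φ₁) * u ^ 2 ≤ (κ * M + φ) * u ^ 2 :=
    mul_le_mul_of_nonneg_right (add_le_add (mul_le_mul_of_nonneg_right hκ hM) hφ) (sq_nonneg u)
  nlinarith [mul_le_mul_of_nonneg_left hΔ hu]

lemma le_of_hasDerivAt_neg_at_level {f f' : ℝ → ℝ} {a C : ℝ}
    (hf : ∀ t, a ≤ t → HasDerivAt f (f' t) t) (ha : f a ≤ C)
    (hlevel : ∀ t, a ≤ t → f t = C → f' t < 0) {t : ℝ} (ht : a ≤ t) : f t ≤ C :=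
  image_le_of_deriv_right_lt_deriv_boundary (B := fun _ ↦ C) (B' := 0)
    (fun s hs ↦ (hf s hs.1).continuousAt.continuousWithinAt)
    (fun s hs ↦ (hf s hs.1).hasDerivWithinAt) ha (fun _ ↦ hasDerivAt_const _ _)
    (fun s hs ↦ hlevel s hs.1) ⟨ht, le_rfl⟩

lemma exists_le_of_mul_hasDerivAt_le {u u' : ℝ → ℝ} {a b c e : ℝ} (hab : a ≤ b) (hc : 0 ≤ c)
    (hu : ∀ t ∈ Icc a b, HasDerivAt u (u' t) t)
    (hdecay : ∀ t ∈ Icc a b, c < u t → u t * u' t ≤ -e)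
    (htime : u a ^ 2 - c ^ 2 ≤ 2 * e * (b - a)) : ∃ t ∈ Icc a b, u t ≤ c := by
  by_contra! habove
  have hg : ∀ t ∈ Icc a b,
      HasDerivAt (fun s ↦ u s ^ 2 + 2 * e * s) (2 * u t * u' t + 2 * e) t := fun t ht ↦
    (((hu t ht).fun_pow 2).fun_add ((hasDerivAt_id' t).const_mul (2 * e))).congr_deriv (by simp)
  have hanti : AntitoneOn (fun s ↦ u s ^ 2 + 2 * e * s) (Icc a b) := by
    refine antitoneOn_of_hasDerivWithinAt_nonpos (f' := fun t ↦ 2 * u t * u' t + 2 * e)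
      (convex_Icc a b)
      (fun t ht ↦ (hg t ht).continuousAt.continuousWithinAt) (fun t ht ↦ ?_) (fun t ht ↦ ?_)
    · exact (hg t (interior_subset ht)).hasDerivWithinAt
    · have ht' := interior_subset ht
      linarith [hdecay t ht' (habove t ht')]
  have hab' := hanti (left_mem_Icc.2 hab) (right_mem_Icc.2 hab) hab
  have hub := habove b (right_mem_Icc.2 hab)
  nlinarith

lemma exists_first_eq_of_lt_of_le {f : ℝ → ℝ} {a b c : ℝ} (hf : ContinuousOn f (Icc a b))
    (ha : c < f a) (hhit : ∃ t ∈ Icc a b, f t ≤ c) :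
    ∃ τ ∈ Icc a b, f τ = c ∧ ∀ t ∈ Ico a τ, c < f t := by
  set S := Icc a b ∩ f ⁻¹' Iic c
  have hbdd : BddBelow S := ⟨a, fun t ht ↦ ht.1.1⟩
  obtain ⟨hτ, hfτ⟩ : sInf S ∈ S :=
    (hf.preimage_isClosed_of_isClosed isClosed_Icc isClosed_Iic).csInf_mem hhit hbdd
  have hbefore : ∀ t ∈ Ico a (sInf S), c < f t := fun t ht ↦ by
    by_contra! hft
    exact (csInf_le hbdd ⟨⟨ht.1, ht.2.le.trans hτ.2⟩, hft⟩).not_gt ht.2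
  refine ⟨sInf S, hτ, ?_, hbefore⟩
  obtain ⟨s, hs, hfs⟩ :=
    intermediate_value_Icc' hτ.1 (hf.mono (Icc_subset_Icc_right hτ.2)) ⟨hfτ, ha.le⟩
  rcases hs.2.eq_or_lt with rfl | hlt
  · exact hfs
  · exact absurd hfs (hbefore s ⟨hs.1, hlt⟩).ne'

lemma exists_hitting_time_of_mul_hasDerivAt_le {u u' : ℝ → ℝ} {a c C e : ℝ} (hc : 0 ≤ c)
    (he : 0 < e) (hu : ∀ t, a ≤ t → HasDerivAt u (u' t) t)
    (hdecay : ∀ t, a ≤ t → u t ∈ Icc c C → u t * u' t ≤ -e) (ha : u a ∈ Ioc c C) :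
    ∃ τ, a ≤ τ ∧ τ ≤ a + (u a ^ 2 - c ^ 2) / (2 * e) ∧ u τ = c ∧ StrictAntiOn u (Icc a τ) := by
  have hneg : ∀ t, a ≤ t → u t ∈ Icc c C → u' t < 0 := fun t ht hut ↦
    neg_of_mul_neg_right (a := u t) (by linarith [hdecay t ht hut]) (hc.trans hut.1)
  have hbelow : ∀ t, a ≤ t → u t ≤ C := fun t ht ↦
    le_of_hasDerivAt_neg_at_level hu ha.2
      (fun s hs hus ↦ hneg s hs ⟨hus ▸ ha.1.le.trans ha.2, hus.le⟩) ht
  set T := a + (u a ^ 2 - c ^ 2) / (2 * e)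
  have hT : a ≤ T :=
    le_add_of_nonneg_right (div_nonneg (by nlinarith [ha.1]) (by positivity))
  have htime : u a ^ 2 - c ^ 2 ≤ 2 * e * (T - a) := by
    rw [add_sub_cancel_left, mul_div_cancel₀ _ (by positivity)]
  obtain ⟨τ, hτ, huτ, habove⟩ := exists_first_eq_of_lt_of_le
    (fun t ht ↦ (hu t ht.1).continuousAt.continuousWithinAt) ha.1
    (exists_le_of_mul_hasDerivAt_le hT hc (fun t ht ↦ hu t ht.1)
      (fun t ht hut ↦ hdecay t ht.1 ⟨hut.le, hbelow t ht.1⟩) htime)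
  refine ⟨τ, hτ.1, hτ.2, huτ, strictAntiOn_of_deriv_neg (convex_Icc a τ)
    (fun t ht ↦ (hu t ht.1).continuousAt.continuousWithinAt) fun t ht ↦ ?_⟩
  rw [interior_Icc] at ht
  rw [(hu t ht.1.le).deriv]
  exact hneg t ht.1.le ⟨(habove t ⟨ht.1.le, ht.2⟩).le, hbelow t ht.1.le⟩

theorem longitudinal_speed_decrease_general (t₀ K M κ₁ φ₁ bpro boff ucri : ℝ)
    (u κ φ Δ : ℝ → ℝ)
    (hK : 0 < K) (hM : 0 < M)
    (hden : bpro < κ₁ * M + φ₁)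
    (hq : boff ^ 2 / (4 * (κ₁ * M + φ₁ - bpro)) < 0.15 ^ 2 * K)
    (hκ : ∀ t, t₀ ≤ t → κ₁ ≤ κ t)
    (hφ : ∀ t, t₀ ≤ t → φ₁ ≤ φ t)
    (hΔ : ∀ t, t₀ ≤ t → u t ∈ Set.Icc 0 ucri → |Δ t| ≤ bpro * u t + boff)
    (hode : ∀ t, t₀ ≤ t →
      HasDerivAt u (-K * u t - (κ t * M + φ t) * u t + Δ t) t) :
    (∀ t, t₀ ≤ t → u t ∈ Set.Icc 0.15 ucri →
      u t * (-K * u t - (κ t * M + φ t) * u t + Δ t) ≤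
          -K * (u t) ^ 2 + boff ^ 2 / (4 * (κ₁ * M + φ₁ - bpro)) ∧
        -K * (u t) ^ 2 + boff ^ 2 / (4 * (κ₁ * M + φ₁ - bpro)) <
          -K * ((u t) ^ 2 - 0.15 ^ 2) ∧
        -K * ((u t) ^ 2 - 0.15 ^ 2) ≤ 0) ∧
    (u t₀ ∈ Set.Ioc 0.15 ucri →
      ∃ tb', t₀ ≤ tb' ∧
        tb' ≤ t₀ + ((u t₀) ^ 2 - 0.15 ^ 2) /
          (2 * 0.15 ^ 2 * K - 2 * (boff ^ 2 / (4 * (κ₁ * M + φ₁ - bpro)))) ∧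
        u tb' = 0.15 ∧ StrictAntiOn u (Set.Icc t₀ tb')) := by
  set q := boff ^ 2 / (4 * (κ₁ * M + φ₁ - bpro))
  have hrate : ∀ t, t₀ ≤ t → u t ∈ Icc 0.15 ucri →
      u t * (-K * u t - (κ t * M + φ t) * u t + Δ t) ≤ -K * u t ^ 2 + q := fun t ht hu ↦
    lyapunov_rate_le (by linarith [hu.1]) hM.le (hκ t ht) (hφ t ht)
      (abs_le.mp (hΔ t ht ⟨by linarith [hu.1], hu.2⟩)).2 hden
  have hKsq : ∀ t, u t ∈ Icc 0.15 ucri → K * 0.15 ^ 2 ≤ K * u t ^ 2 := fun t hu ↦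
    mul_le_mul_of_nonneg_left (pow_le_pow_left₀ (by norm_num) hu.1 2) hK.le
  refine ⟨fun t ht hu ↦ ⟨hrate t ht hu, by linarith, by linarith [hKsq t hu]⟩, fun hu₀ ↦ ?_⟩
  obtain ⟨τ, hτ₀, hτT, huτ, hanti⟩ := exists_hitting_time_of_mul_hasDerivAt_le (by norm_num)
    (sub_pos.2 hq) hode (fun t ht hu ↦ by linarith [hrate t ht hu, hKsq t hu]) hu₀
  exact ⟨τ, hτ₀, hτT.trans_eq (by ring), huτ, hanti⟩

/-- For `u̇ = −K u − (κ M + φ) u + Δ` with `|Δ t| ≤ b_pro·u t + b_off` when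
`u t ∈ [0, u_cri]`, `κ₁ M + φ₁ > b_pro` and `q := b_off²/(4(κ₁ M + φ₁ − b_pro)) <
0.15² K`: whenever `u t ∈ [0.15, u_cri]`, `V̇ = u·u̇ ≤ −K u² + q < −K(u² − 0.15²)`;
and if `u t₀ ∈ (0.15, u_cri]` then `u` first reaches `0.15` at some time
`t_b' ≤ t₀ + (u t₀² − 0.15²)/(2·0.15²·K − 2q)`. -/
theorem longitudinal_speed_decrease (t₀ K M κ₁ φ₁ bpro boff ucri : ℝ)
    (u κ φ Δ : ℝ → ℝ)
    (hK : 0 < K) (hM : 0 < M) (hκ₁ : 0 < κ₁) (hφ₁ : 0 < φ₁)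
    (hbpro : 0 < bpro) (hboff : 0 < boff) (hucri : 0.15 < ucri)
    (hden : bpro < κ₁ * M + φ₁)
    (hq : boff ^ 2 / (4 * (κ₁ * M + φ₁ - bpro)) < 0.15 ^ 2 * K)
    (hκ : ∀ t, t₀ ≤ t → κ₁ ≤ κ t)
    (hφ : ∀ t, t₀ ≤ t → φ₁ ≤ φ t)
    (hΔ : ∀ t, t₀ ≤ t → u t ∈ Set.Icc 0 ucri → |Δ t| ≤ bpro * u t + boff)
    (hode : ∀ t, t₀ ≤ t →
      HasDerivAt u (-K * u t - (κ t * M + φ t) * u t + Δ t) t) :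
    (∀ t, t₀ ≤ t → u t ∈ Set.Icc 0.15 ucri →
      u t * (-K * u t - (κ t * M + φ t) * u t + Δ t) ≤
          -K * (u t) ^ 2 + boff ^ 2 / (4 * (κ₁ * M + φ₁ - bpro)) ∧
        -K * (u t) ^ 2 + boff ^ 2 / (4 * (κ₁ * M + φ₁ - bpro)) <
          -K * ((u t) ^ 2 - 0.15 ^ 2) ∧
        -K * ((u t) ^ 2 - 0.15 ^ 2) ≤ 0) ∧
    (u t₀ ∈ Set.Ioc 0.15 ucri →
      ∃ tb', t₀ ≤ tb' ∧
        tb' ≤ t₀ + ((u t₀) ^ 2 - 0.15 ^ 2) /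
          (2 * 0.15 ^ 2 * K - 2 * (boff ^ 2 / (4 * (κ₁ * M + φ₁ - bpro)))) ∧
        u tb' = 0.15 ∧ StrictAntiOn u (Set.Icc t₀ tb')) :=
  longitudinal_speed_decrease_general t₀ K M κ₁ φ₁ bpro boff ucri u κ φ Δ hK hM hden hq hκ hφ hΔ
    hode
end
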